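/- arXiv:1109.1082 — 9 statements merged into one kernel-verified Lean document; each statement's English description precedes it below -/
import Mathlib

section
/- Every improper weighted simple game on n voters has strictly more than 2^{n-1} winning coalitions. Equivalently, every weighted simple game on n voters with at most 2^{n-1} winning coalitions is proper. -/
/-!
If both `A` and `Aᶜ` reach the quota `q`, the total weight is at least `2q`, so for every
coalition `B` one of `B`, `Bᶜ` reaches the quota. Hence `W` together with its complements
covers all `2^n` coalitions, while `A` and `Aᶜ` (distinct, as `∅` loses) are counted twice.
-/

/-- A simple game on `n` voters. -/
def IsSimpleGame (n : ℕ) (W : Finset (Finset (Fin n))) : Prop :=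
  Finset.univ ∈ W ∧ ∅ ∉ W ∧ ∀ S ∈ W, ∀ R : Finset (Fin n), S ⊆ R → R ∈ W

/-- A weighted simple game. -/
def IsWeighted (n : ℕ) (W : Finset (Finset (Fin n))) : Prop :=
  ∃ (q : ℝ) (w : Fin n → ℝ), (∀ i, 0 ≤ w i) ∧ 0 < q ∧ q ≤ ∑ i, w i ∧
    ∀ A : Finset (Fin n), A ∈ W ↔ q ≤ ∑ i ∈ A, w i

open Finset FinsetFamily

theorem Finset.le_sum_or_le_sum_compl {α M : Type*} [Fintype α] [DecidableEq α]
    [AddCommMonoid M] [LinearOrder M] [IsOrderedCancelAddMonoid M] {w : α → M} {q : M}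
    {A : Finset α} (hA : q ≤ ∑ i ∈ A, w i) (hAc : q ≤ ∑ i ∈ Aᶜ, w i) (B : Finset α) :
    q ≤ ∑ i ∈ B, w i ∨ q ≤ ∑ i ∈ Bᶜ, w i := by
  by_contra! hB
  have hlt : ∑ i, w i < q + q := by
    simpa only [sum_add_sum_compl] using add_lt_add hB.1 hB.2
  have hle : q + q ≤ ∑ i, w i := by
    simpa only [sum_add_sum_compl] using add_le_add hA hAc
  exact hlt.not_ge hle

theorem Finset.card_add_two_le_two_mul_card {β : Type*} [BooleanAlgebra β] [Fintype β]
    [DecidableEq β] {W : Finset β} (hW : ∀ b, b ∈ W ∨ bᶜ ∈ W) {a : β} (ha : a ∈ W)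
    (hac : aᶜ ∈ W) (ha_ne : a ≠ aᶜ) :
    Fintype.card β + 2 ≤ 2 * #W := by
  have hcover : W ∪ Wᶜˢ = univ := eq_univ_of_forall fun b => by simpa using hW b
  have hpair : {a, aᶜ} ⊆ W ∩ Wᶜˢ := by
    simp [insert_subset_iff, ha, hac]
  have hpair_card : #{a, aᶜ} = 2 := card_pair ha_ne
  have hcount := card_union_add_card_inter W Wᶜˢ
  rw [hcover, card_univ, card_compls] at hcount
  have hinter := card_le_card hpair
  omega

theorem improper_weighted_card_gt_general
    (n : ℕ) (W : Finset (Finset (Fin n)))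
    (hwtd : IsWeighted n W)
    (himproper : ∃ A : Finset (Fin n), A ∈ W ∧ Aᶜ ∈ W) :
    2 ^ (n - 1) < W.card := by
  obtain ⟨q, w, -, hq, -, hmem⟩ := hwtd
  obtain ⟨A, hA, hAc⟩ := himproper
  have hstrong : ∀ B, B ∈ W ∨ Bᶜ ∈ W := fun B => by
    simpa only [hmem] using le_sum_or_le_sum_compl ((hmem A).1 hA) ((hmem Aᶜ).1 hAc) B
  have hA_ne : A ≠ Aᶜ := by
    intro h
    have hA_empty : A = ∅ := by simpa [← h] using inter_compl A
    exact hq.not_ge (by simpa using (hmem ∅).1 (hA_empty ▸ hA))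
  have hcard := card_add_two_le_two_mul_card hstrong hA hAc hA_ne
  simp only [Fintype.card_finset, Fintype.card_fin] at hcard
  cases n with
  | zero => simp only [pow_zero] at hcard ⊢; omega
  | succ m => rw [pow_succ] at hcard; simp only [add_tsub_cancel_right]; omega

/-- Every improper weighted simple game on `n` voters has strictly more than
`2^(n-1)` winning coalitions. -/
theorem improper_weighted_card_gt
    (n : ℕ) (W : Finset (Finset (Fin n)))
    (hSG : IsSimpleGame n W) (hwtd : IsWeighted n W)
    (himproper : ∃ A : Finset (Fin n), A ∈ W ∧ Aᶜ ∈ W) :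
    2 ^ (n - 1) < W.card :=
  improper_weighted_card_gt_general n W hwtd himproper
end

section
/- For every n ≥ 1 and every integer r with 1 ≤ r ≤ 2^n − 1, there exists a weighted simple game on n voters having exactly r losing coalitions (equivalently exactly 2^n − r winning coalitions, where losing coalitions are counted among all 2^n subsets of N, including ∅). Moreover, if r ≥ 2^{n-1}, such a game can be chosen to be proper. (One construction: give voter i weight 2^{i-1} and use quota r.) -/
open Finset

section BinaryValue

variable {n : ℕ}

def binaryValue (A : Finset (Fin n)) : ℕ := ∑ i ∈ A, 2 ^ (i : ℕ)

theorem binaryValue_injective : Function.Injective (binaryValue (n := n)) := by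
  have h : binaryValue (n := n) = (fun s : Finset ℕ ↦ ∑ i ∈ s, 2 ^ i) ∘ map Fin.valEmbedding := by
    funext A
    simp [binaryValue, sum_map]
  rw [h]
  exact (geomSum_injective le_rfl).comp (map_injective _)

theorem binaryValue_mono {A B : Finset (Fin n)} (h : A ⊆ B) : binaryValue A ≤ binaryValue B :=
  sum_le_sum_of_subset h

theorem binaryValue_univ : binaryValue (univ : Finset (Fin n)) = 2 ^ n - 1 := by
  rw [binaryValue, Fin.sum_univ_eq_sum_range (fun i ↦ 2 ^ i), Nat.geomSum_eq le_rfl]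
  simp

theorem binaryValue_add_binaryValue_compl (A : Finset (Fin n)) :
    binaryValue A + binaryValue Aᶜ = 2 ^ n - 1 := by
  rw [← binaryValue_univ, binaryValue, binaryValue, sum_add_sum_compl]
  rfl

theorem binaryValue_lt (A : Finset (Fin n)) : binaryValue A < 2 ^ n := by
  have := binaryValue_add_binaryValue_compl A
  have := Nat.one_le_two_pow (n := n)
  omega

theorem image_binaryValue_univ :
    (univ : Finset (Finset (Fin n))).image binaryValue = range (2 ^ n) := by
  refine eq_of_subset_of_card_le (fun m hm ↦ ?_) ?_
  · obtain ⟨A, -, rfl⟩ := mem_image.1 hm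
    exact mem_range.2 (binaryValue_lt A)
  · simp [card_image_of_injective _ binaryValue_injective]

theorem card_filter_binaryValue_lt {r : ℕ} (hr : r ≤ 2 ^ n) :
    #{A : Finset (Fin n) | binaryValue A < r} = r := by
  have hrange : (range (2 ^ n)).filter (· < r) = range r := by
    ext
    simp only [mem_filter, mem_range]
    omega
  rw [← card_image_of_injective _ binaryValue_injective, ← filter_image (p := (· < r)),
    image_binaryValue_univ, hrange, card_range]

end BinaryValue

section ThresholdGame

variable {n r : ℕ}

def binaryThresholdGame (n r : ℕ) : Finset (Finset (Fin n)) :=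
  {A | r ≤ binaryValue A}

theorem mem_binaryThresholdGame {A : Finset (Fin n)} :
    A ∈ binaryThresholdGame n r ↔ r ≤ binaryValue A := by
  simp [binaryThresholdGame]

theorem isSimpleGame_binaryThresholdGame (hr1 : 1 ≤ r) (hr2 : r ≤ 2 ^ n - 1) :
    IsSimpleGame n (binaryThresholdGame n r) := by
  refine ⟨?_, ?_, fun S hS R hSR ↦ ?_⟩
  · rwa [mem_binaryThresholdGame, binaryValue_univ]
  · simp only [mem_binaryThresholdGame, binaryValue, sum_empty]
    omega
  · exact mem_binaryThresholdGame.2 <|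
      (mem_binaryThresholdGame.1 hS).trans (binaryValue_mono hSR)

theorem isWeighted_binaryThresholdGame (hr1 : 1 ≤ r) (hr2 : r ≤ 2 ^ n - 1) :
    IsWeighted n (binaryThresholdGame n r) := by
  have hcast (A : Finset (Fin n)) : ∑ i ∈ A, (2 : ℝ) ^ (i : ℕ) = binaryValue A := by
    simp [binaryValue]
  refine ⟨r, fun i ↦ 2 ^ (i : ℕ), fun i ↦ by positivity, by exact_mod_cast hr1, ?_, fun A ↦ ?_⟩
  · rw [hcast univ, binaryValue_univ]
    exact_mod_cast hr2
  · rw [mem_binaryThresholdGame, hcast, Nat.cast_le]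

theorem card_binaryThresholdGame (hr : r ≤ 2 ^ n) :
    #(binaryThresholdGame n r) = 2 ^ n - r := by
  have h := card_filter_add_card_filter_not (s := (univ : Finset (Finset (Fin n))))
    (fun A ↦ r ≤ binaryValue A)
  simp only [not_le, card_filter_binaryValue_lt hr, card_univ, Fintype.card_finset,
    Fintype.card_fin] at h
  rw [binaryThresholdGame]
  omega

theorem compl_notMem_binaryThresholdGame (hr : 2 ^ (n - 1) ≤ r) {A : Finset (Fin n)}
    (hA : A ∈ binaryThresholdGame n r) : Aᶜ ∉ binaryThresholdGame n r := by
  rw [mem_binaryThresholdGame] at hA ⊢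
  have hsum := binaryValue_add_binaryValue_compl A
  have hpow : 2 ^ n ≤ 2 * 2 ^ (n - 1) := by
    rcases n with _ | n <;> simp [pow_succ, mul_comm]
  have := Nat.one_le_two_pow (n := n)
  omega

end ThresholdGame

theorem exists_weighted_game_of_each_rank_general
    (n r : ℕ) (hr1 : 1 ≤ r) (hr2 : r ≤ 2 ^ n - 1) :
    ∃ W : Finset (Finset (Fin n)), IsSimpleGame n W ∧ IsWeighted n W ∧
      W.card = 2 ^ n - r ∧
      (2 ^ (n - 1) ≤ r → ∀ A ∈ W, Aᶜ ∉ W) :=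
  ⟨binaryThresholdGame n r, isSimpleGame_binaryThresholdGame hr1 hr2,
    isWeighted_binaryThresholdGame hr1 hr2, card_binaryThresholdGame (hr2.trans (Nat.sub_le _ _)),
    fun h _ ↦ compl_notMem_binaryThresholdGame h⟩

/-- For every `n ≥ 1` and `1 ≤ r ≤ 2^n - 1` there exists a weighted simple game
on `n` voters with exactly `r` losing coalitions (i.e. `2^n - r` winning coalitions,
among all `2^n` subsets), which can moreover be chosen proper when `r ≥ 2^(n-1)`. -/
theorem exists_weighted_game_of_each_rank
    (n r : ℕ) (hn : 1 ≤ n) (hr1 : 1 ≤ r) (hr2 : r ≤ 2 ^ n - 1) :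
    ∃ W : Finset (Finset (Fin n)), IsSimpleGame n W ∧ IsWeighted n W ∧
      W.card = 2 ^ n - r ∧
      (2 ^ (n - 1) ≤ r → ∀ A ∈ W, Aᶜ ∉ W) :=
  exists_weighted_game_of_each_rank_general n r hr1 hr2
end

section
/- Let A ⊆ N = {1,…,n} and let A^c = N ∖ A. Then A^c ⪰ A fails in the coalition ordering if and only if there exists k with 1 ≤ k and n − 2k + 2 ≥ 1 such that |A ∩ {n−2k+2, n−2k+3, …, n}| ≥ k, i.e., A contains at least k of the largest 2k−1 elements of N. (Equivalently, the principal filter generated by A is a proper linear game exactly under this condition.) -/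
/-!
Since `Aᶜ` and `A` partition each top window `{t, …, n-1}` (0-indexed), `Aᶜ ⪰ A` fails exactly
when `A` is a strict majority of some top window. A window of odd length `2k - 1` in which `A` is a
strict majority contains at least `k` elements of `A`; a window of even length can be shortened by
its lowest element while `A` stays a strict majority, which makes its length odd.
-/

/-- The coalition ordering: `B ⪰ A` iff `|B ∩ {k,…,n}| ≥ |A ∩ {k,…,n}|` for every `k`.
(Voters `1,…,n` are represented by `Fin n`, voter `v` corresponding to index `v - 1`.) -/
def CoalGE (n : ℕ) (B A : Finset (Fin n)) : Prop :=
  ∀ k : Fin n, (A.filter (fun i => k ≤ i)).card ≤ (B.filter (fun i => k ≤ i)).card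

open Finset

namespace Fin

variable {n : ℕ}

theorem card_filter_univ_le_val (t : ℕ) : #{i : Fin n | t ≤ i.val} = n - t := by
  have h := card_filter_add_card_filter_not (s := (univ : Finset (Fin n))) (t ≤ ·.val)
  simp only [not_le, card_filter_val_lt, card_univ, Fintype.card_fin] at h
  omega

theorem card_filter_compl_add_card_filter_le_val (A : Finset (Fin n)) (t : ℕ) :
    #{i ∈ Aᶜ | t ≤ i.val} + #{i ∈ A | t ≤ i.val} = n - t := by
  rw [← card_filter_univ_le_val t, ← card_union_of_disjoint
    (disjoint_filter_filter disjoint_compl_left), ← filter_union, union_comm, union_compl]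

theorem card_filter_le_val_le_card_filter_succ_le_val_add_one (s : Finset (Fin n)) (t : ℕ) :
    #{i ∈ s | t ≤ i.val} ≤ #{i ∈ s | t + 1 ≤ i.val} + 1 := by
  calc #{i ∈ s | t ≤ i.val}
      ≤ #({i ∈ s | t + 1 ≤ i.val} ∪ {i ∈ s | i.val = t}) :=
        card_le_card fun i hi => by simp only [mem_filter, mem_union] at hi ⊢; grind
    _ ≤ #{i ∈ s | t + 1 ≤ i.val} + #{i ∈ s | i.val = t} := card_union_le _ _
    _ ≤ #{i ∈ s | t + 1 ≤ i.val} + 1 := by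
        gcongr
        exact card_le_one.mpr fun a ha b hb => Fin.ext (by simp_all)

end Fin

theorem not_coalGE_compl_iff {n : ℕ} (A : Finset (Fin n)) :
    ¬ CoalGE n Aᶜ A ↔ ∃ t < n, n - t < 2 * #{i ∈ A | t ≤ i.val} := by
  simp only [CoalGE, not_forall, not_le, Fin.le_def]
  constructor
  · rintro ⟨⟨t, ht⟩, hlt⟩
    have hsum := Fin.card_filter_compl_add_card_filter_le_val A t
    exact ⟨t, ht, by simp only at hlt; omega⟩
  · rintro ⟨t, ht, hlt⟩
    have hsum := Fin.card_filter_compl_add_card_filter_le_val A t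
    exact ⟨⟨t, ht⟩, by simp only; omega⟩

/-- `Aᶜ ⪰ A` fails in the coalition ordering if and only if there is some `k ≥ 1` with
`2k - 1 ≤ n` such that `A` contains at least `k` of the largest `2k - 1` voters,
i.e. at least `k` voters among `{n-2k+2, …, n}` (indices `≥ n+1-2k` in `Fin n`). -/
theorem compl_not_ge_iff_majority_prefix
    (n : ℕ) (A : Finset (Fin n)) :
    ¬ CoalGE n Aᶜ A ↔
      ∃ k : ℕ, 1 ≤ k ∧ 2 * k ≤ n + 1 ∧
        k ≤ (A.filter (fun i => n + 1 - 2 * k ≤ i.val)).card := by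
  rw [not_coalGE_compl_iff]
  constructor
  · rintro ⟨t, ht, hmaj⟩
    obtain ⟨t', ht', hodd, hmaj'⟩ :
        ∃ t' < n, Odd (n - t') ∧ n - t' < 2 * #{i ∈ A | t' ≤ i.val} := by
      rcases Nat.even_or_odd (n - t) with heven | hodd
      · have hdrop := Fin.card_filter_le_val_le_card_filter_succ_le_val_add_one A t
        rw [Nat.even_iff] at heven
        exact ⟨t + 1, by omega, Nat.odd_iff.mpr (by omega), by omega⟩
      · exact ⟨t, ht, hodd, hmaj⟩
    obtain ⟨m, hm⟩ := hodd
    refine ⟨m + 1, by omega, by omega, ?_⟩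
    rw [show n + 1 - 2 * (m + 1) = t' by omega]
    omega
  · rintro ⟨k, hk, hkn, hmaj⟩
    exact ⟨n + 1 - 2 * k, by omega, by omega⟩
end

section
/- For n ≥ 1, the number of subsets A ⊆ N = {1,…,n} such that A^c = N∖A does NOT satisfy A^c ⪰ A in the coalition ordering equals 2^n − C(n, ⌊n/2⌋). Equivalently, the number of subsets A with A^c ⪰ A equals the central binomial coefficient C(n, ⌊n/2⌋). (This counts the proper linear games on n voters generated by exactly one shift-minimal winning coalition.) -/
/-!
Read the voters from the top down and let a coalition `A` take a step `+1` at each member and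
`-1` at each non-member; `Aᶜ ⪰ A` says that this walk never rises above `0`. By the reflection
principle, the walks of length `n` that never rise above `j` are as numerous as those ending in
`[-j-1, j]`. Both counts obey the same recursion in `n`, got by deleting the top voter, which moves
the bound `j` by `±1` (for the endpoint count this is Pascal's rule). For `j = 0` the endpoint
condition says `|A| = ⌊n/2⌋`.
-/

open Finset

theorem Finset.powerset_map {α β : Type*} (f : α ↪ β) (s : Finset α) :
    (s.map f).powerset = s.powerset.map (mapEmbedding f).toEmbedding := by
  ext t
  simp [subset_map_iff, eq_comm]

theorem Fin.sum_finset_castSucc {M : Type*} [AddCommMonoid M] {n : ℕ}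
    (f : Finset (Fin (n + 1)) → M) :
    ∑ A, f A = ∑ B : Finset (Fin n),
      (f (B.map Fin.castSuccEmb) + f (insert (Fin.last n) (B.map Fin.castSuccEmb))) := by
  rw [← powerset_univ, Fin.univ_castSuccEmb, cons_eq_insert, sum_powerset_insert (by simp),
    Finset.powerset_map, sum_map, sum_map, ← sum_add_distrib, powerset_univ]
  rfl

theorem Fin.card_filter_finset_castSucc {n : ℕ} (p : Finset (Fin (n + 1)) → Prop)
    [DecidablePred p] :
    #{A | p A} = #{B : Finset (Fin n) | p (B.map Fin.castSuccEmb)} +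
      #{B : Finset (Fin n) | p (insert (Fin.last n) (B.map Fin.castSuccEmb))} := by
  simp only [card_filter, Fin.sum_finset_castSucc _, sum_add_distrib]

/-- `A` has at most `j` more members than non-members among the voters `≥ k`, for every `k`. -/
def UpperExcessLE (n j : ℕ) (A : Finset (Fin n)) : Prop :=
  ∀ k : Fin n, 2 * #{i ∈ A | k ≤ i} ≤ n - k + j

instance {n j : ℕ} : DecidablePred (UpperExcessLE n j) := fun _ => by
  unfold UpperExcessLE; infer_instance

theorem card_filter_add_card_filter_compl {α : Type*} [Fintype α] [DecidableEq α]
    (p : α → Prop) [DecidablePred p] (A : Finset α) :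
    #{i ∈ A | p i} + #{i ∈ Aᶜ | p i} = #{i | p i} := by
  rw [← card_union_of_disjoint (disjoint_filter_filter disjoint_compl_right), ← filter_union,
    union_compl]

theorem upperExcessLE_zero_iff_coalGE {n : ℕ} (A : Finset (Fin n)) :
    UpperExcessLE n 0 A ↔ CoalGE n Aᶜ A := by
  refine forall_congr' fun k => ?_
  have h := card_filter_add_card_filter_compl (k ≤ ·) A
  rw [filter_le_eq_Ici, Fin.card_Ici] at h
  omega

section castSucc

variable {n : ℕ} (B : Finset (Fin n))

theorem card_filter_castSucc_le_map (k : Fin n) :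
    #{i ∈ B.map Fin.castSuccEmb | k.castSucc ≤ i} = #{i ∈ B | k ≤ i} := by
  simp [filter_map, Function.comp_def]

theorem filter_last_le_map :
    {i ∈ B.map Fin.castSuccEmb | Fin.last n ≤ i} = ∅ := by
  simp [filter_map, Function.comp_def]

theorem upperExcessLE_map_castSucc {j : ℕ} :
    UpperExcessLE (n + 1) j (B.map Fin.castSuccEmb) ↔ UpperExcessLE n (j + 1) B := by
  simp only [UpperExcessLE, Fin.forall_fin_succ', card_filter_castSucc_le_map, filter_last_le_map,
    Fin.val_castSucc, Fin.val_last, card_empty]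
  refine (and_iff_left (by omega)).trans (forall_congr' fun k => ?_)
  omega

theorem last_notMem_map_castSuccEmb : Fin.last n ∉ B.map Fin.castSuccEmb := by
  simp [Fin.castSucc_ne_last]

theorem card_filter_le_insert_last (k : Fin (n + 1)) :
    #{i ∈ insert (Fin.last n) (B.map Fin.castSuccEmb) | k ≤ i} =
      #{i ∈ B.map Fin.castSuccEmb | k ≤ i} + 1 := by
  rw [filter_insert, if_pos (Fin.le_last k), card_insert_of_notMem]
  exact fun h => last_notMem_map_castSuccEmb B (mem_of_mem_filter _ h)

theorem upperExcessLE_insert_last {j : ℕ} :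
    UpperExcessLE (n + 1) j (insert (Fin.last n) (B.map Fin.castSuccEmb)) ↔
      0 < j ∧ UpperExcessLE n (j - 1) B := by
  simp only [UpperExcessLE, Fin.forall_fin_succ', card_filter_le_insert_last,
    card_filter_castSucc_le_map, filter_last_le_map, Fin.val_castSucc, Fin.val_last, card_empty]
  rw [and_comm, show 2 * (0 + 1) ≤ n + 1 - n + j ↔ 0 < j by omega]
  exact and_congr_right fun hj => forall_congr' fun k => by omega

end castSucc

theorem card_upperExcessLE (n j : ℕ) :
    #{A : Finset (Fin n) | UpperExcessLE n j A} =
      #{A : Finset (Fin n) | n ≤ 2 * #A + j + 1 ∧ 2 * #A ≤ n + j} := by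
  induction n generalizing j with
  | zero =>
    simp [UpperExcessLE, eq_empty_of_isEmpty]
  | succ n ih =>
    rw [Fin.card_filter_finset_castSucc, Fin.card_filter_finset_castSucc]
    simp only [upperExcessLE_map_castSucc, upperExcessLE_insert_last, card_map,
      card_insert_of_notMem (last_notMem_map_castSuccEmb _)]
    have ih_pred : #{B : Finset (Fin n) | 0 < j ∧ UpperExcessLE n (j - 1) B} =
        #{B : Finset (Fin n) | 0 < j ∧ n ≤ 2 * #B + (j - 1) + 1 ∧ 2 * #B ≤ n + (j - 1)} := by
      rcases j with _ | j
      · simp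
      · simpa using ih j
    rw [ih, ih_pred]
    simp only [card_filter, ← sum_add_distrib]
    -- In terms of `x = 2 * #B - n`, the intervals `[-j-2, j+1]` and `[-j, j-1]` (empty if `j = 0`)
    -- cover each integer as often as `[-j, j+1]` and `[-j-2, j-1]` do.
    exact sum_congr rfl fun B _ => by split_ifs <;> omega

theorem card_upperExcessLE_zero (n : ℕ) :
    #{A : Finset (Fin n) | UpperExcessLE n 0 A} = n.choose (n / 2) := by
  have central : ({A | n ≤ 2 * #A + 0 + 1 ∧ 2 * #A ≤ n + 0} : Finset (Finset (Fin n))) =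
      powersetCard (n / 2) univ := by
    rw [powersetCard_eq_filter, powerset_univ]
    exact filter_congr fun A _ => by omega
  rw [card_upperExcessLE, central, card_powersetCard, card_univ, Fintype.card_fin]

open scoped Classical in
theorem card_one_generator_proper_games_general
    (n : ℕ) :
    ((Finset.univ : Finset (Finset (Fin n))).filter
        (fun A => ¬ CoalGE n Aᶜ A)).card = 2 ^ n - n.choose (n / 2) ∧
    ((Finset.univ : Finset (Finset (Fin n))).filter
        (fun A => CoalGE n Aᶜ A)).card = n.choose (n / 2) := by
  have dominated : #{A : Finset (Fin n) | CoalGE n Aᶜ A} = n.choose (n / 2) := by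
    rw [← card_upperExcessLE_zero]
    exact congrArg card (filter_congr fun A _ => (upperExcessLE_zero_iff_coalGE A).symm)
  refine ⟨?_, dominated⟩
  have split :=
    card_filter_add_card_filter_not (s := univ) fun A : Finset (Fin n) => CoalGE n Aᶜ A
  rw [card_univ, Fintype.card_finset, Fintype.card_fin, dominated] at split
  omega

open scoped Classical in
/-- For `n ≥ 1`, the number of coalitions `A ⊆ N` whose complement does NOT dominate
them in the coalition ordering is `2^n - C(n, ⌊n/2⌋)`; equivalently, the number with
`Aᶜ ⪰ A` is the central binomial coefficient. This counts the proper linear games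
on `n` voters with exactly one shift-minimal winning coalition. -/
theorem card_one_generator_proper_games
    (n : ℕ) (hn : 1 ≤ n) :
    ((Finset.univ : Finset (Finset (Fin n))).filter
        (fun A => ¬ CoalGE n Aᶜ A)).card = 2 ^ n - n.choose (n / 2) ∧
    ((Finset.univ : Finset (Finset (Fin n))).filter
        (fun A => CoalGE n Aᶜ A)).card = n.choose (n / 2) :=
  card_one_generator_proper_games_general n
end

section
/- If W is a weighted simple game on n voters, then W has a normalized realization (q, w) such that whenever voters i and j are equally desirable in W, their weights are equal: w_i = w_j. -/
/-- `(q, w)` is a normalized realization of `W`. -/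
def IsNormRealization (n : ℕ) (W : Finset (Finset (Fin n))) (q : ℝ) (w : Fin n → ℝ) : Prop :=
  (∀ i, 0 ≤ w i) ∧ (∑ i, w i = 1) ∧ 0 < q ∧ q ≤ 1 ∧
    ∀ A : Finset (Fin n), A ∈ W ↔ q ≤ ∑ i ∈ A, w i

/-- Voters `i` and `j` are equally desirable in `W`. -/
def EquallyDesirable (n : ℕ) (W : Finset (Finset (Fin n))) (i j : Fin n) : Prop :=
  ∀ S : Finset (Fin n), i ∉ S → j ∉ S → (insert i S ∈ W ↔ insert j S ∈ W)
/-!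
Average a realization `(q, w)` over the symmetry group of `W`, the permutations `σ` with
`σ • W = W`. Each `w ∘ σ` realizes `W` with the same quota `q`, and realizations with a common
quota are closed under averaging, because a coalition wins exactly when it clears `q` under every
one of them. The averaged weights are invariant under the group, and the transposition of two
equally desirable voters belongs to it.
-/

open Finset MulAction Pointwise

lemma Equiv.swap_smul_finset_of_mem_iff {α : Type*} [DecidableEq α] {i j : α} {A : Finset α}
    (h : i ∈ A ↔ j ∈ A) : Equiv.swap i j • A = A := by
  ext x
  rw [← Finset.inv_smul_mem_iff, Equiv.swap_inv, Equiv.Perm.smul_def, Equiv.swap_apply_def]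
  split_ifs <;> simp_all

lemma Equiv.Perm.sum_smul_finset {α M : Type*} [DecidableEq α] [AddCommMonoid M]
    (σ : Equiv.Perm α) (A : Finset α) (w : α → M) :
    ∑ x ∈ σ • A, w x = ∑ i ∈ A, w (σ i) :=
  sum_image fun _ _ _ _ h ↦ σ.injective h

lemma iff_le_sum_div_card {ι : Type*} [Fintype ι] [Nonempty ι] {P : Prop} {q : ℝ}
    (f : ι → ℝ) (hf : ∀ k, P ↔ q ≤ f k) : P ↔ q ≤ (∑ k, f k) / Fintype.card ι := by
  have hcard : (0 : ℝ) < Fintype.card ι := by exact_mod_cast Fintype.card_pos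
  rw [le_div_iff₀ hcard, ← nsmul_eq_mul', ← card_univ, ← sum_const]
  by_cases hP : P
  · exact iff_of_true hP (sum_le_sum fun k _ ↦ (hf k).mp hP)
  · refine iff_of_false hP (not_le.mpr ?_)
    exact sum_lt_sum_of_nonempty univ_nonempty fun k _ ↦ not_le.mp (mt (hf k).mpr hP)

namespace EquallyDesirable

variable {n : ℕ} {W : Finset (Finset (Fin n))} {i j : Fin n}

lemma symm (h : EquallyDesirable n W i j) : EquallyDesirable n W j i :=
  fun S hj hi ↦ (h S hi hj).symm

lemma swap_smul_mem_of_mem_of_notMem (h : EquallyDesirable n W i j) {A : Finset (Fin n)}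
    (hi : i ∈ A) (hj : j ∉ A) : Equiv.swap i j • A ∈ W ↔ A ∈ W := by
  have hiS : i ∉ A.erase i := notMem_erase i A
  have hjS : j ∉ A.erase i := fun h ↦ hj (mem_of_mem_erase h)
  rw [← insert_erase hi, smul_finset_insert, Equiv.Perm.smul_def, Equiv.swap_apply_left,
    Equiv.swap_smul_finset_of_mem_iff (iff_of_false hiS hjS)]
  exact (h _ hiS hjS).symm

lemma swap_mem_stabilizer (h : EquallyDesirable n W i j) :
    Equiv.swap i j ∈ stabilizer (Equiv.Perm (Fin n)) W := by
  refine mem_stabilizer_finset.mpr fun A ↦ ?_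
  by_cases hi : i ∈ A <;> by_cases hj : j ∈ A
  · rw [Equiv.swap_smul_finset_of_mem_iff (iff_of_true hi hj)]
  · exact h.swap_smul_mem_of_mem_of_notMem hi hj
  · rw [Equiv.swap_comm]
    exact h.symm.swap_smul_mem_of_mem_of_notMem hj hi
  · rw [Equiv.swap_smul_finset_of_mem_iff (iff_of_false hi hj)]

end EquallyDesirable

noncomputable def permAverage {α : Type*} (H : Subgroup (Equiv.Perm α)) [Fintype H]
    (w : α → ℝ) (i : α) : ℝ :=
  (∑ σ : H, w ((σ : Equiv.Perm α) i)) / Fintype.card H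

lemma permAverage_apply_perm {α : Type*} {H : Subgroup (Equiv.Perm α)} [Fintype H]
    (w : α → ℝ) {τ : Equiv.Perm α} (hτ : τ ∈ H) (i : α) :
    permAverage H w (τ i) = permAverage H w i := by
  unfold permAverage
  congr 1
  exact Fintype.sum_equiv (Equiv.mulRight ⟨τ, hτ⟩) _ _ fun _ ↦ rfl

namespace IsNormRealization

variable {n : ℕ} {W : Finset (Finset (Fin n))} {q : ℝ}

lemma comp_perm {w : Fin n → ℝ} (hw : IsNormRealization n W q w) {σ : Equiv.Perm (Fin n)}
    (hσ : σ ∈ stabilizer (Equiv.Perm (Fin n)) W) : IsNormRealization n W q (w ∘ σ) := by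
  obtain ⟨hw0, hw1, hq0, hq1, hwin⟩ := hw
  refine ⟨fun i ↦ hw0 (σ i), (Equiv.sum_comp σ w).trans hw1, hq0, hq1, fun A ↦ ?_⟩
  rw [← mem_stabilizer_finset.mp hσ A, hwin, Equiv.Perm.sum_smul_finset]
  rfl

lemma average {ι : Type*} [Fintype ι] [Nonempty ι] {w : ι → Fin n → ℝ}
    (hw : ∀ k, IsNormRealization n W q (w k)) :
    IsNormRealization n W q fun i ↦ (∑ k, w k i) / Fintype.card ι := by
  have hcard : (Fintype.card ι : ℝ) ≠ 0 := by exact_mod_cast Fintype.card_ne_zero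
  obtain ⟨-, -, hq0, hq1, -⟩ := hw (Classical.arbitrary ι)
  refine ⟨fun i ↦ div_nonneg (sum_nonneg fun k _ ↦ (hw k).1 i) (Nat.cast_nonneg _), ?_, hq0, hq1,
    fun A ↦ ?_⟩
  · rw [← sum_div, sum_comm]
    simp only [(hw _).2.1, sum_const, card_univ, nsmul_eq_mul, mul_one, div_self hcard]
  · rw [← sum_div, sum_comm]
    exact iff_le_sum_div_card _ fun k ↦ (hw k).2.2.2.2 A

lemma permAverage_stabilizer [Fintype (stabilizer (Equiv.Perm (Fin n)) W)] {w : Fin n → ℝ}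
    (hw : IsNormRealization n W q w) :
    IsNormRealization n W q (permAverage (stabilizer (Equiv.Perm (Fin n)) W) w) :=
  average fun σ ↦ hw.comp_perm σ.2

end IsNormRealization

theorem exists_realization_equal_weights_on_symmetry_classes_general
    (n : ℕ) (W : Finset (Finset (Fin n)))
    (hwtd : ∃ (q : ℝ) (w : Fin n → ℝ), IsNormRealization n W q w) :
    ∃ (q : ℝ) (w : Fin n → ℝ), IsNormRealization n W q w ∧
      ∀ i j : Fin n, EquallyDesirable n W i j → w i = w j := by
  classical
  obtain ⟨q, w, hw⟩ := hwtd
  refine ⟨q, permAverage (stabilizer (Equiv.Perm (Fin n)) W) w, hw.permAverage_stabilizer,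
    fun i j hij ↦ ?_⟩
  rw [← permAverage_apply_perm w hij.swap_mem_stabilizer i, Equiv.swap_apply_left]

/-- Every weighted simple game admits a normalized realization in which all equally
desirable voters receive equal weights. -/
theorem exists_realization_equal_weights_on_symmetry_classes
    (n : ℕ) (W : Finset (Finset (Fin n))) (hSG : IsSimpleGame n W)
    (hwtd : ∃ (q : ℝ) (w : Fin n → ℝ), IsNormRealization n W q w) :
    ∃ (q : ℝ) (w : Fin n → ℝ), IsNormRealization n W q w ∧
      ∀ i j : Fin n, EquallyDesirable n W i j → w i = w j :=
  exists_realization_equal_weights_on_symmetry_classes_general n W hwtd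
end

section
/- Let w : N → ℝ be a generic weight vector with all w_i ≥ 0 and Σ_{i∈N} w_i = 1, where N = {1,…,n}, and for q ∈ (0,1] let W(q) = {A ⊆ N : Σ_{i∈A} w_i ≥ q}. Then for every q ∈ (0,1] there exists q* ∈ (0,1] such that W(q*) is the dual of W(q): for every A ⊆ N, A ∈ W(q*) ⇔ N∖A ∉ W(q). (Thus the chain of games along a generic vertical line is self-dual: if a game appears in it, so does its dual.) -/
/-- The game at quota `q` for the weight vector `w`. -/
noncomputable def gameAt (n : ℕ) (w : Fin n → ℝ) (q : ℝ) : Finset (Finset (Fin n)) :=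
  Finset.univ.filter fun A => q ≤ ∑ i ∈ A, w i

open Finset

theorem Finset.exists_gt_forall_le_iff_lt {α : Type*} [LinearOrder α] [NoMaxOrder α]
    (S : Finset α) (t : α) : ∃ s, t < s ∧ ∀ x ∈ S, s ≤ x ↔ t < x := by
  obtain ⟨u, htu⟩ := exists_gt t
  set U := insert u (S.filter (t < ·))
  have hU : U.Nonempty := insert_nonempty _ _
  have hlt : t < U.min' hU := by
    obtain hmin | hmin := mem_insert.1 (U.min'_mem hU)
    · rwa [hmin]
    · exact (mem_filter.1 hmin).2
  refine ⟨U.min' hU, hlt, fun x hx => ⟨fun hle => hlt.trans_le hle, fun htx => ?_⟩⟩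
  exact U.min'_le x (mem_insert_of_mem (mem_filter.2 ⟨hx, htx⟩))

theorem compl_notMem_gameAt_iff {n : ℕ} {w : Fin n → ℝ} (hsum : ∑ i, w i = 1) (q : ℝ)
    (A : Finset (Fin n)) : Aᶜ ∉ gameAt n w q ↔ 1 - q < ∑ i ∈ A, w i := by
  have hcompl : ∑ i ∈ Aᶜ, w i = 1 - ∑ i ∈ A, w i := by
    rw [← hsum, ← sum_compl_add_sum A w, add_sub_cancel_right]
  simp only [gameAt, mem_filter, mem_univ, true_and, not_le, hcompl]
  exact sub_lt_comm

theorem generic_vertical_line_selfDual_general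
    (n : ℕ) (w : Fin n → ℝ) (hsum : ∑ i, w i = 1) :
    ∀ q ∈ Set.Ioc (0:ℝ) 1, ∃ qs ∈ Set.Ioc (0:ℝ) 1,
      ∀ A : Finset (Fin n), (A ∈ gameAt n w qs ↔ Aᶜ ∉ gameAt n w q) := by
  rintro q ⟨hq0, hq1⟩
  -- The dual game consists of the coalitions of weight `> 1 - q`; a quota just above `1 - q`
  -- that no coalition sum separates from it describes the same game.
  obtain ⟨qs, hlt, hcut⟩ :=
    (univ.image fun A : Finset (Fin n) => ∑ i ∈ A, w i).exists_gt_forall_le_iff_lt (1 - q)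
  have hmem (A : Finset (Fin n)) : qs ≤ ∑ i ∈ A, w i ↔ 1 - q < ∑ i ∈ A, w i :=
    hcut _ (mem_image_of_mem _ (mem_univ A))
  have hle_one : qs ≤ 1 := by
    simpa only [hsum] using (hmem univ).2 (by rw [hsum]; linarith)
  refine ⟨qs, ⟨by linarith, hle_one⟩, fun A => ?_⟩
  rw [compl_notMem_gameAt_iff hsum, gameAt, mem_filter]
  simpa only [mem_univ, true_and] using hmem A

/-- For a generic nonnegative weight vector summing to `1`, the chain of games along
the vertical line above `w` is self-dual: for each `q ∈ (0,1]` there is `q* ∈ (0,1]`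
such that `W(q*)` is the dual of `W(q)`. -/
theorem generic_vertical_line_selfDual
    (n : ℕ) (w : Fin n → ℝ) (hw : ∀ i, 0 ≤ w i) (hsum : ∑ i, w i = 1)
    (hgen : ∀ A B : Finset (Fin n), (∑ i ∈ A, w i) = (∑ i ∈ B, w i) → A = B) :
    ∀ q ∈ Set.Ioc (0:ℝ) 1, ∃ qs ∈ Set.Ioc (0:ℝ) 1,
      ∀ A : Finset (Fin n), (A ∈ gameAt n w qs ↔ Aᶜ ∉ gameAt n w q) :=
  generic_vertical_line_selfDual_general n w hsum
end

section
/- Let W be a weighted simple game on n voters and let A ∈ W be a coalition such that U := W ∖ {A} is also a simple game (so A is a minimal winning coalition of W and A ≠ N). Then U is weighted if and only if there exists a normalized realization (q, w) of W such that Σ_{i∈A} w_i < Σ_{i∈B} w_i for every B ∈ W with B ≠ A. -/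
/-!
Work with unnormalized realizations: rescaling by the total weight normalizes any of them.
Given a realization `(q, w)` of `W` with `A` strictly lightest, raising the quota to the least
weight of `W \ {A}` realizes `W \ {A}`. Conversely, mixing a realization `(q, w)` of `W` with a
realization `(q', w')` of `W \ {A}` in the ratio `(q' - w'(A)) : (w(A) - q)` puts `A` exactly on
the quota; adding a small multiple of `w'` then lifts every other winning coalition strictly
above `A`, while losing coalitions, being strictly below the quota, stay below it.
-/

structure IsRealization {ι : Type*} (W : Finset (Finset ι)) (q : ℝ) (w : ι → ℝ) : Prop where
  nonneg : ∀ i, 0 ≤ w i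
  mem_iff : ∀ X : Finset ι, X ∈ W ↔ q ≤ ∑ i ∈ X, w i

open Finset Filter Topology

theorem IsNormRealization.isRealization {n : ℕ} {W : Finset (Finset (Fin n))} {q : ℝ}
    {w : Fin n → ℝ} (h : IsNormRealization n W q w) : IsRealization W q w :=
  ⟨h.1, h.2.2.2.2⟩

namespace IsRealization

variable {ι : Type*} {W : Finset (Finset ι)} {A : Finset ι} {q q' : ℝ} {w w' : ι → ℝ}

theorem sum_lt_of_notMem (h : IsRealization W q w) {X : Finset ι} (hX : X ∉ W) :
    ∑ i ∈ X, w i < q :=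
  not_le.1 (mt (h.mem_iff X).2 hX)

theorem quota_pos (h : IsRealization W q w) (hempty : ∅ ∉ W) : 0 < q := by
  simpa using h.sum_lt_of_notMem hempty

theorem sum_univ_pos [Fintype ι] (h : IsRealization W q w) (huniv : univ ∈ W) (hempty : ∅ ∉ W) :
    0 < ∑ i, w i :=
  (h.quota_pos hempty).trans_le ((h.mem_iff univ).1 huniv)

theorem isNormRealization {n : ℕ} {W : Finset (Finset (Fin n))} {w : Fin n → ℝ}
    (h : IsRealization W q w) (huniv : univ ∈ W) (hempty : ∅ ∉ W) :
    IsNormRealization n W (q / ∑ i, w i) (fun i => w i / ∑ i, w i) := by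
  have hS := h.sum_univ_pos huniv hempty
  refine ⟨fun i => div_nonneg (h.nonneg i) hS.le, by rw [← sum_div, div_self hS.ne'],
    div_pos (h.quota_pos hempty) hS, (div_le_one hS).2 ((h.mem_iff univ).1 huniv), fun X => ?_⟩
  rw [← sum_div, div_le_div_iff_of_pos_right hS]
  exact h.mem_iff X

variable [DecidableEq ι]

theorem exists_erase (h : IsRealization W q w) (hne : (W.erase A).Nonempty)
    (hlt : ∀ B ∈ W, B ≠ A → ∑ i ∈ A, w i < ∑ i ∈ B, w i) :
    ∃ q', IsRealization (W.erase A) q' w := by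
  obtain ⟨B₀, hB₀, hq'⟩ := exists_mem_eq_inf' hne (fun B => ∑ i ∈ B, w i)
  refine ⟨(W.erase A).inf' hne (fun B => ∑ i ∈ B, w i), h.nonneg,
    fun X => ⟨fun hX => inf'_le _ hX, fun hX => ?_⟩⟩
  rw [hq'] at hX
  have hB₀W := mem_of_mem_erase hB₀
  refine mem_erase.2 ⟨?_, (h.mem_iff X).2 (((h.mem_iff B₀).1 hB₀W).trans hX)⟩
  rintro rfl
  exact (hlt B₀ hB₀W (ne_of_mem_erase hB₀)).not_ge hX

theorem exists_sum_eq (hW : IsRealization W q w) (hU : IsRealization (W.erase A) q' w')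
    (hA : A ∈ W) : ∃ Q v, IsRealization W Q v ∧ ∑ i ∈ A, v i = Q := by
  set a := ∑ i ∈ A, w i - q
  set γ := q' - ∑ i ∈ A, w' i
  have ha : 0 ≤ a := sub_nonneg.2 ((hW.mem_iff A).1 hA)
  have hγ : 0 < γ := sub_pos.2 (hU.sum_lt_of_notMem (W.notMem_erase A))
  have hsum : ∀ X : Finset ι,
      ∑ i ∈ X, (a * w' i + γ * w i) = a * ∑ i ∈ X, w' i + γ * ∑ i ∈ X, w i := fun X => by
    rw [sum_add_distrib, mul_sum, mul_sum]
  have hsumA : a * ∑ i ∈ A, w' i + γ * ∑ i ∈ A, w i = a * q' + γ * q := by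
    simp only [a, γ]; ring
  refine ⟨a * q' + γ * q, fun i => a * w' i + γ * w i, ⟨fun i => ?_, fun X => ?_⟩, ?_⟩
  · have := hW.nonneg i; have := hU.nonneg i; positivity
  · rw [hsum]
    constructor
    · intro hX
      by_cases hXA : X = A
      · rw [hXA, hsumA]
      · exact add_le_add
          (mul_le_mul_of_nonneg_left ((hU.mem_iff X).1 (mem_erase.2 ⟨hXA, hX⟩)) ha)
          (mul_le_mul_of_nonneg_left ((hW.mem_iff X).1 hX) hγ.le)
    · contrapose
      intro hX
      exact not_le.2 <| add_lt_add_of_le_of_lt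
        (mul_le_mul_of_nonneg_left (hU.sum_lt_of_notMem (hX ∘ mem_of_mem_erase)).le ha)
        (mul_lt_mul_of_pos_left (hW.sum_lt_of_notMem hX) hγ)
  · exact (hsum A).trans hsumA

theorem exists_sum_lt [Fintype ι] (hW : IsRealization W q w) (hwA : ∑ i ∈ A, w i = q)
    (hU : IsRealization (W.erase A) q' w') :
    ∃ Q v, IsRealization W Q v ∧ ∀ B ∈ W, B ≠ A → ∑ i ∈ A, v i < ∑ i ∈ B, v i := by
  have hw'A : ∑ i ∈ A, w' i < q' := hU.sum_lt_of_notMem (W.notMem_erase A)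
  have hlose : ∀ᶠ ε in 𝓝 (0 : ℝ), ∀ X, X ∉ W →
      ∑ i ∈ X, w i + ε * ∑ i ∈ X, w' i < q + ε * ∑ i ∈ A, w' i := by
    refine eventually_all.2 fun X => ?_
    by_cases hX : X ∈ W
    · exact Eventually.of_forall fun _ h => absurd hX h
    · refine (ContinuousAt.eventually_lt (by fun_prop) (by fun_prop) ?_).mono fun _ h _ => h
      simpa using hW.sum_lt_of_notMem hX
  obtain ⟨ε, hεlose, hε : 0 < ε⟩ :=
    ((hlose.filter_mono (nhdsWithin_le_nhds (s := Set.Ioi 0))).and self_mem_nhdsWithin).exists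
  have hsum : ∀ X : Finset ι,
      ∑ i ∈ X, (w i + ε * w' i) = ∑ i ∈ X, w i + ε * ∑ i ∈ X, w' i := fun X => by
    rw [sum_add_distrib, mul_sum]
  have hgt : ∀ B ∈ W, B ≠ A →
      q + ε * ∑ i ∈ A, w' i < ∑ i ∈ B, w i + ε * ∑ i ∈ B, w' i := fun B hB hBA =>
    add_lt_add_of_le_of_lt ((hW.mem_iff B).1 hB) <| mul_lt_mul_of_pos_left
      (hw'A.trans_le ((hU.mem_iff B).1 (mem_erase.2 ⟨hBA, hB⟩))) hε
  refine ⟨q + ε * ∑ i ∈ A, w' i, fun i => w i + ε * w' i,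
    ⟨fun i => add_nonneg (hW.nonneg i) (mul_nonneg hε.le (hU.nonneg i)), fun X => ?_⟩,
    fun B hB hBA => ?_⟩
  · rw [hsum]
    constructor
    · intro hX
      by_cases hXA : X = A
      · rw [hXA, hwA]
      · exact (hgt X hX hXA).le
    · contrapose
      exact fun hX => not_le.2 (hεlose X hX)
  · rw [hsum, hsum, hwA]
    exact hgt B hB hBA

end IsRealization

/-- Let `W` be a weighted simple game and `A ∈ W` be such that `U = W \ {A}` is a
simple game. Then `U` is weighted iff `W` has a normalized realization at which
the weight of `A` is strictly smaller than that of every other winning coalition. -/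
theorem cover_weighted_iff_facet
    (n : ℕ) (W : Finset (Finset (Fin n))) (hSG : IsSimpleGame n W)
    (hwtd : ∃ (q : ℝ) (w : Fin n → ℝ), IsNormRealization n W q w)
    (A : Finset (Fin n)) (hA : A ∈ W)
    (hU : IsSimpleGame n (W.erase A)) :
    (∃ (q : ℝ) (w : Fin n → ℝ), IsNormRealization n (W.erase A) q w) ↔
      (∃ (q : ℝ) (w : Fin n → ℝ), IsNormRealization n W q w ∧
        ∀ B ∈ W, B ≠ A → (∑ i ∈ A, w i) < ∑ i ∈ B, w i) := by
  constructor
  · rintro ⟨q', w', hU'⟩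
    obtain ⟨q, w, hW⟩ := hwtd
    obtain ⟨Q, v, hv, hvA⟩ := hW.isRealization.exists_sum_eq hU'.isRealization hA
    obtain ⟨Q', u, hu, hlt⟩ := hv.exists_sum_lt hvA hU'.isRealization
    refine ⟨_, _, hu.isNormRealization hSG.1 hSG.2.1, fun B hB hBA => ?_⟩
    simp only [← sum_div]
    exact div_lt_div_of_pos_right (hlt B hB hBA) (hu.sum_univ_pos hSG.1 hSG.2.1)
  · rintro ⟨q, w, hW, hlt⟩
    obtain ⟨q', hU'⟩ := hW.isRealization.exists_erase ⟨univ, hU.1⟩ hlt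
    exact ⟨_, _, hU'.isNormRealization hU.1 hU.2.1⟩
end

section
/- Let U be a weighted simple game on n voters and let A ⊆ N be a losing coalition of U (A ∉ U) such that W := U ∪ {A} is also a simple game (so A is a maximal losing coalition of U and A ≠ ∅). Then W is weighted if and only if there exists a normalized realization (q, w) of U such that Σ_{i∈A} w_i > Σ_{i∈C} w_i for every C ∉ U with C ≠ A. -/
/-!
A normalized weight vector admits a quota realizing a game exactly when every winning coalition
outweighs every losing one. So if `A` outweighs the other losers of `U`, its own weight is a quota
for `U ∪ {A}`. Conversely, given realizations `w₀` of `U` and `v` of `U ∪ {A}`, the first puts `A`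
strictly below `U` and the second strictly above the other losers. Along the segment
`(1 - t) w₀ + t v`, the parameters with the first property and those with the second form open
sets containing `0` and `1` respectively; they cover `[0, 1]`, since every member of `U`
outweighs every other loser under both `w₀` and `v`, hence at every `t`. By connectedness of
`[0, 1]` some `t` has both properties.
-/

open Finset

theorem IsNormRealization.sum_lt_sum {n : ℕ} {W : Finset (Finset (Fin n))} {q : ℝ}
    {w : Fin n → ℝ} (h : IsNormRealization n W q w) {S B : Finset (Fin n)} (hS : S ∈ W)
    (hB : B ∉ W) : ∑ i ∈ B, w i < ∑ i ∈ S, w i :=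
  (not_le.mp fun hqB => hB ((h.2.2.2.2 B).mpr hqB)).trans_le ((h.2.2.2.2 S).mp hS)

theorem exists_isNormRealization_of_sum_lt_sum {n : ℕ} {W : Finset (Finset (Fin n))}
    (huniv : univ ∈ W) (hempty : ∅ ∉ W) {w : Fin n → ℝ} (hw : ∀ i, 0 ≤ w i)
    (hw_sum : ∑ i, w i = 1)
    (hsep : ∀ S ∈ W, ∀ B ∉ W, ∑ i ∈ B, w i < ∑ i ∈ S, w i) :
    ∃ q, IsNormRealization n W q w := by
  refine ⟨W.inf' ⟨univ, huniv⟩ (fun S => ∑ i ∈ S, w i), hw, hw_sum, ?_, ?_, fun B => ⟨?_, ?_⟩⟩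
  · simpa using (lt_inf'_iff _).mpr fun S hS => hsep S hS ∅ hempty
  · exact hw_sum ▸ inf'_le _ huniv
  · exact fun hB => inf'_le _ hB
  · exact fun hB => by_contra fun hBW => not_le.mpr ((lt_inf'_iff _).mpr fun S hS => hsep S hS B hBW) hB

theorem convex_comb_lt_of_lt_of_lt {t x y x' y' : ℝ} (ht : t ∈ Set.Icc (0 : ℝ) 1) (hx : x < x')
    (hy : y < y') : (1 - t) * x + t * y < (1 - t) * x' + t * y' := by
  obtain ⟨ht0, ht1⟩ := ht
  rcases ht1.lt_or_eq with ht1 | rfl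
  · nlinarith [mul_pos (sub_pos.mpr ht1) (sub_pos.mpr hx), mul_nonneg ht0 (sub_pos.mpr hy).le]
  · simpa using hy

theorem exists_mem_Icc_convex_comb_separating {α : Type*} {f g : α → ℝ} {a : α} {P Q : Set α}
    (hP : P.Finite) (hQ : Q.Finite) (hf : ∀ S ∈ P, f a < f S) (hg : ∀ C ∈ Q, g C < g a)
    (hfPQ : ∀ S ∈ P, ∀ C ∈ Q, f C < f S) (hgPQ : ∀ S ∈ P, ∀ C ∈ Q, g C < g S) :
    ∃ t ∈ Set.Icc (0 : ℝ) 1,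
      (∀ S ∈ P, (1 - t) * f a + t * g a < (1 - t) * f S + t * g S) ∧
      ∀ C ∈ Q, (1 - t) * f C + t * g C < (1 - t) * f a + t * g a := by
  set u := ⋂ S ∈ P, {t : ℝ | (1 - t) * f a + t * g a < (1 - t) * f S + t * g S}
  set v := ⋂ C ∈ Q, {t : ℝ | (1 - t) * f C + t * g C < (1 - t) * f a + t * g a}
  have hu : IsOpen u := hP.isOpen_biInter fun S _ => isOpen_lt (by fun_prop) (by fun_prop)
  have hv : IsOpen v := hQ.isOpen_biInter fun C _ => isOpen_lt (by fun_prop) (by fun_prop)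
  have hcover : Set.Icc (0 : ℝ) 1 ⊆ u ∪ v := by
    intro t ht
    by_contra hnot
    simp only [u, v, Set.mem_union, Set.mem_iInter, Set.mem_ofPred_eq, not_or, not_forall,
      not_lt] at hnot
    obtain ⟨⟨S, hS, hSa⟩, ⟨C, hC, haC⟩⟩ := hnot
    exact (convex_comb_lt_of_lt_of_lt ht (hfPQ S hS C hC) (hgPQ S hS C hC)).not_ge
      (hSa.trans haC)
  have h0 : (0 : ℝ) ∈ Set.Icc (0 : ℝ) 1 ∩ u := ⟨by simp, by simpa [u] using hf⟩
  have h1 : (1 : ℝ) ∈ Set.Icc (0 : ℝ) 1 ∩ v := ⟨by simp, by simpa [v] using hg⟩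
  obtain ⟨t, ht, htu, htv⟩ := isPreconnected_Icc u v hu hv hcover ⟨0, h0⟩ ⟨1, h1⟩
  exact ⟨t, ht, by simpa [u] using htu, by simpa [v] using htv⟩

theorem exists_isNormRealization_sum_lt_of_insert {n : ℕ} {U : Finset (Finset (Fin n))}
    (huniv : univ ∈ U) (hempty : ∅ ∉ U) {A : Finset (Fin n)} (hA : A ∉ U) {q₀ p : ℝ}
    {w₀ v : Fin n → ℝ} (h₀ : IsNormRealization n U q₀ w₀)
    (hv : IsNormRealization n (insert A U) p v) :
    ∃ (q : ℝ) (w : Fin n → ℝ), IsNormRealization n U q w ∧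
      ∀ C : Finset (Fin n), C ∉ U → C ≠ A → ∑ i ∈ C, w i < ∑ i ∈ A, w i := by
  have hlose : ∀ {C}, C ∉ U → C ≠ A → C ∉ insert A U := by simp_all
  obtain ⟨t, ⟨ht0, ht1⟩, hAU, hCA⟩ := exists_mem_Icc_convex_comb_separating
    (f := fun B => ∑ i ∈ B, w₀ i) (g := fun B => ∑ i ∈ B, v i) (a := A)
    (P := ↑U) (Q := {C | C ∉ U ∧ C ≠ A}) U.finite_toSet (Set.toFinite _)
    (fun S hS => h₀.sum_lt_sum hS hA)
    (fun C hC => hv.sum_lt_sum (mem_insert_self A U) (hlose hC.1 hC.2))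
    (fun S hS C hC => h₀.sum_lt_sum hS hC.1)
    (fun S hS C hC => hv.sum_lt_sum (mem_insert_of_mem hS) (hlose hC.1 hC.2))
  set w : Fin n → ℝ := fun i => (1 - t) * w₀ i + t * v i
  have hsum : ∀ B : Finset (Fin n),
      ∑ i ∈ B, w i = (1 - t) * ∑ i ∈ B, w₀ i + t * ∑ i ∈ B, v i := by
    simp [w, sum_add_distrib, mul_sum]
  have hdom : ∀ C : Finset (Fin n), C ∉ U → C ≠ A → ∑ i ∈ C, w i < ∑ i ∈ A, w i := by
    intro C hCU hCA'
    simpa only [hsum] using hCA C ⟨hCU, hCA'⟩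
  have hnonneg : ∀ i, 0 ≤ w i := fun i =>
    add_nonneg (mul_nonneg (sub_nonneg.mpr ht1) (h₀.1 i)) (mul_nonneg ht0 (hv.1 i))
  have htotal : ∑ i, w i = 1 := by
    rw [hsum, h₀.2.1, hv.2.1]
    ring
  obtain ⟨q, hq⟩ := exists_isNormRealization_of_sum_lt_sum huniv hempty hnonneg htotal
    fun S hS B hB => by
      have hAS : ∑ i ∈ A, w i < ∑ i ∈ S, w i := by simpa only [hsum] using hAU S hS
      by_cases hBA : B = A
      · exact hBA ▸ hAS
      · exact (hdom B hB hBA).trans hAS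
  exact ⟨q, w, hq, hdom⟩

theorem exists_isNormRealization_insert_of_sum_lt {n : ℕ} {U : Finset (Finset (Fin n))}
    {A : Finset (Fin n)} (huniv : univ ∈ insert A U) (hempty : ∅ ∉ insert A U) (hA : A ∉ U)
    {q : ℝ} {w : Fin n → ℝ} (h : IsNormRealization n U q w)
    (hdom : ∀ C : Finset (Fin n), C ∉ U → C ≠ A → ∑ i ∈ C, w i < ∑ i ∈ A, w i) :
    ∃ q', IsNormRealization n (insert A U) q' w := by
  refine exists_isNormRealization_of_sum_lt_sum huniv hempty h.1 h.2.1 fun S hS B hB => ?_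
  obtain ⟨hBA, hBU⟩ := not_or.mp (mem_insert.not.mp hB)
  rcases mem_insert.mp hS with rfl | hS
  · exact hdom B hBU hBA
  · exact (hdom B hBU hBA).trans (h.sum_lt_sum hS hA)

/-- Let `U` be a weighted simple game and `A ∉ U` a losing coalition such that
`W = U ∪ {A}` is a simple game. Then `W` is weighted iff `U` has a normalized
realization at which the weight of `A` is strictly greater than that of every
other losing coalition. -/
theorem covered_weighted_iff_facet
    (n : ℕ) (U : Finset (Finset (Fin n))) (hSG : IsSimpleGame n U)
    (hwtd : ∃ (q : ℝ) (w : Fin n → ℝ), IsNormRealization n U q w)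
    (A : Finset (Fin n)) (hA : A ∉ U)
    (hW : IsSimpleGame n (insert A U)) :
    (∃ (q : ℝ) (w : Fin n → ℝ), IsNormRealization n (insert A U) q w) ↔
      (∃ (q : ℝ) (w : Fin n → ℝ), IsNormRealization n U q w ∧
        ∀ C : Finset (Fin n), C ∉ U → C ≠ A → (∑ i ∈ C, w i) < ∑ i ∈ A, w i) := by
  constructor
  · rintro ⟨p, v, hv⟩
    obtain ⟨q₀, w₀, h₀⟩ := hwtd
    exact exists_isNormRealization_sum_lt_of_insert hSG.1 hSG.2.1 hA h₀ hv
  · rintro ⟨q, w, hw, hdom⟩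
    obtain ⟨q', hq'⟩ := exists_isNormRealization_insert_of_sum_lt hW.1 hW.2.1 hA hw hdom
    exact ⟨q', w, hq'⟩
end

section
/- For subsets A, B ⊆ N = {1,…,n}, the following are equivalent: (i) B ⪰ A in the coalition ordering, i.e., |B ∩ {k,…,n}| ≥ |A ∩ {k,…,n}| for every 1 ≤ k ≤ n; (ii) Σ_{i∈B} w_i ≥ Σ_{i∈A} w_i for every weight vector w : N → ℝ with 0 ≤ w_1 ≤ w_2 ≤ ⋯ ≤ w_n. (Geometrically: the hyperplane of coalition B lies above that of A throughout the region of ordered weights exactly when B dominates A in the coalitions poset M(n).) -/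
/-!
If every tail `{k, k+1, …}` meets `B` at least as often as it meets `A`, then Hall's condition
holds for matching each `a ∈ A` to some `b ∈ B` with `a ≤ b`: a set `s ⊆ A` with least element
`a₀` has at most as many elements as `A ∩ [a₀, ∞)`, and all of `B ∩ [a₀, ∞)` is available to it.
The injective matching moves every element of `A` upwards into `B`, which can only increase the
total of a monotone nonnegative weight. Conversely, the indicator of a tail is such a weight.
-/

open Finset Function

section CoalitionOrder

variable {α : Type*} [LinearOrder α] {A B : Finset α}

theorem exists_injective_le_of_card_filter_le
    (h : ∀ k, #(A.filter (k ≤ ·)) ≤ #(B.filter (k ≤ ·))) :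
    ∃ f : A → α, Injective f ∧ ∀ a, f a ∈ B ∧ (a : α) ≤ f a := by
  simp_rw [← mem_filter]
  refine (all_card_le_biUnion_card_iff_exists_injective _).1 fun s => ?_
  obtain rfl | hs := s.eq_empty_or_nonempty
  · simp
  set a₀ := s.min' hs
  calc #s = #(s.map (Embedding.subtype _)) := (card_map _).symm
    _ ≤ #(A.filter (↑a₀ ≤ ·)) := card_le_card fun x hx => by
        obtain ⟨a, ha, rfl⟩ := mem_map.1 hx
        exact mem_filter.2 ⟨a.2, s.min'_le a ha⟩
    _ ≤ #(B.filter (↑a₀ ≤ ·)) := h a₀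
    _ ≤ #(s.biUnion fun a => B.filter (↑a ≤ ·)) :=
        card_le_card (subset_biUnion_of_mem (fun a : A => B.filter (↑a ≤ ·)) (s.min'_mem hs))

theorem sum_le_sum_of_card_filter_le {M : Type*} [AddCommMonoid M] [PartialOrder M]
    [IsOrderedAddMonoid M] {w : α → M} (hw : ∀ i, 0 ≤ w i) (hmono : Monotone w)
    (h : ∀ k, #(A.filter (k ≤ ·)) ≤ #(B.filter (k ≤ ·))) :
    ∑ i ∈ A, w i ≤ ∑ i ∈ B, w i := by
  classical
  obtain ⟨f, hf, hfB⟩ := exists_injective_le_of_card_filter_le h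
  calc ∑ i ∈ A, w i = ∑ a : A, w a := (sum_coe_sort A w).symm
    _ ≤ ∑ a : A, w (f a) := sum_le_sum fun a _ => hmono (hfB a).2
    _ = ∑ i ∈ univ.map ⟨f, hf⟩, w i := (sum_map univ ⟨f, hf⟩ w).symm
    _ ≤ ∑ i ∈ B, w i := sum_le_sum_of_subset_of_nonneg
        (fun x hx => by obtain ⟨a, -, rfl⟩ := mem_map.1 hx; exact (hfB a).1)
        fun i _ _ => hw i

end CoalitionOrder

theorem card_filter_le_of_forall_sum_le {α : Type*} [Preorder α] [DecidableLE α]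
    {A B : Finset α}
    (h : ∀ w : α → ℝ, (∀ i, 0 ≤ w i) → Monotone w → ∑ i ∈ A, w i ≤ ∑ i ∈ B, w i) (k : α) :
    #(A.filter (k ≤ ·)) ≤ #(B.filter (k ≤ ·)) := by
  have := h (fun i => if k ≤ i then 1 else 0) (fun i => by positivity)
    fun a b hab => by
      dsimp only
      split_ifs with ha hb <;> first | exact absurd (ha.trans hab) hb | norm_num
  simpa [sum_ite] using this

/-- A coalition `B` dominates `A` in the coalition ordering iff `B`'s total weight
is at least `A`'s for every nonnegative monotone (ordered) weight vector. -/
theorem coalGE_iff_forall_ordered_weights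
    (n : ℕ) (A B : Finset (Fin n)) :
    (∀ k : Fin n,
        (A.filter (fun i => k ≤ i)).card ≤ (B.filter (fun i => k ≤ i)).card) ↔
      (∀ w : Fin n → ℝ, (∀ i, 0 ≤ w i) → Monotone w →
        (∑ i ∈ A, w i) ≤ ∑ i ∈ B, w i) :=
  ⟨fun h _ hw hmono => sum_le_sum_of_card_filter_le hw hmono h,
    card_filter_le_of_forall_sum_le⟩
end
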